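/- Let Q be a unital quantale, M a Q-module generated by a subset X ⊆ M. Then M is a projective object in the category of Q-modules if and only if there exists k ∈ Q^(X×X) with k⋆k = k (where (k⋆k)(x,y) = ⋁_{z∈X} k(x,z)·k(z,y)) such that M is isomorphic to the submodule of Q^X generated by the rows {k(x,·) : x ∈ X}. -/

import Mathlib

universe u v

/-- A (left) module over a unital quantale `Q`: a complete lattice with a scalar
multiplication satisfying `(a*b)•v = a•(b•v)`, distributivity over arbitrary joins
in both arguments, and `1•v = v`. -/
class QuantaleModule (Q : Type u) (M : Type v) [Monoid Q] [CompleteLattice Q]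
    [CompleteLattice M] extends SMul Q M where
  mul_smul : ∀ (a b : Q) (v : M), (a * b) • v = a • b • v
  smul_sSup : ∀ (a : Q) (S : Set M), a • sSup S = ⨆ v ∈ S, a • v
  sSup_smul : ∀ (S : Set Q) (v : M), sSup S • v = ⨆ a ∈ S, a • v
  one_smul : ∀ v : M, (1 : Q) • v = v

/-- A homomorphism of `Q`-modules: preserves arbitrary joins and the scalar action. -/
def IsHom (Q : Type u) {M N : Type*} [Monoid Q] [CompleteLattice Q]
    [CompleteLattice M] [CompleteLattice N] [QuantaleModule Q M] [QuantaleModule Q N]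
    (f : M → N) : Prop :=
  (∀ S : Set M, f (sSup S) = ⨆ v ∈ S, f v) ∧ (∀ (a : Q) (v : M), f (a • v) = a • f v)

/-- The free `Q`-module `Q^X`, with pointwise joins and scalar multiplication. -/
instance piQuantaleModule (Q : Type u) (X : Type v) [Monoid Q] [CompleteLattice Q]
    [IsQuantale Q] : QuantaleModule Q (X → Q) where
  smul a f := fun x => a * f x
  mul_smul a b f := funext fun x => mul_assoc a b (f x)
  one_smul f := funext fun x => one_mul (f x)
  smul_sSup a S := by
    funext x
    show a * sSup S x = (⨆ v ∈ S, (fun y => a * v y)) x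
    simp [sSup_apply, iSup_apply, Quantale.mul_iSup_distrib, iSup_subtype']
  sSup_smul S f := by
    funext x
    show sSup S * f x = (⨆ a ∈ S, (fun y => a * f y)) x
    simp [sSup_mul_distrib, iSup_apply]

/-- Projectivity of a `Q`-module: the lifting property against surjective
`Q`-module homomorphisms. -/
def ProjectiveQM (Q : Type u) (M : Type u) [Monoid Q] [CompleteLattice Q] [IsQuantale Q]
    [CompleteLattice M] [QuantaleModule Q M] : Prop :=
  ∀ (N P : Type u) [CompleteLattice N] [CompleteLattice P]
    [QuantaleModule Q N] [QuantaleModule Q P] (pi : N → P) (g : M → P),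
    IsHom Q pi → Function.Surjective pi → IsHom Q g →
    ∃ h : M → N, IsHom Q h ∧ pi ∘ h = g

/-- The `Q`-module transform `h_k : Q^X → Q^X` with kernel `k`. -/
def hk {Q : Type u} [Monoid Q] [CompleteLattice Q] {X : Type v} (k : X → X → Q)
    (f : X → Q) : X → Q := fun y => ⨆ x, f x * k x y

/-- The matrix product `(k ⋆ l)(x,y) = ⨆ z, k x z * l z y`. -/
def matStar {Q : Type u} [Monoid Q] [CompleteLattice Q] {X : Type v} (k l : X → X → Q) :
    X → X → Q := fun x y => ⨆ z, k x z * l z y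

/-!
Every `Q`-module generated by `X` is a quotient `ε : Q^X → M`, `c ↦ ⨆ x, c x • x`, and the
free module `Q^X` is projective. Hence `M` is projective iff `ε` has a homomorphic section
`s`, i.e. iff `M` is a retract of `Q^X`. For a section `s` the endomorphism `s ∘ ε` of `Q^X`
is `h_k` for the kernel `k x = s x`; it is idempotent, which is `k ⋆ k = k`, and its range is
the copy `s(M)` of `M`. Conversely an idempotent `h_k` retracts `Q^X` onto its range.
-/

open Function

namespace QuantaleModule

variable {Q : Type u} [Monoid Q] [CompleteLattice Q] {M : Type*} [CompleteLattice M]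
  [QuantaleModule Q M]

theorem smul_iSup {ι : Type*} (a : Q) (v : ι → M) : a • ⨆ i, v i = ⨆ i, a • v i := by
  rw [iSup, smul_sSup, iSup_range]

theorem iSup_smul {ι : Type*} (c : ι → Q) (v : M) : (⨆ i, c i) • v = ⨆ i, c i • v := by
  rw [iSup, sSup_smul, iSup_range]

def linearCombination {X : Type*} (n : X → M) (c : X → Q) : M := ⨆ x, c x • n x

end QuantaleModule

open QuantaleModule

namespace IsHom

variable {Q : Type u} [Monoid Q] [CompleteLattice Q] {M N P : Type*}
  [CompleteLattice M] [CompleteLattice N] [CompleteLattice P]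
  [QuantaleModule Q M] [QuantaleModule Q N] [QuantaleModule Q P]

theorem map_iSup {f : M → N} (hf : IsHom Q f) {ι : Type*} (v : ι → M) :
    f (⨆ i, v i) = ⨆ i, f (v i) := by
  rw [iSup, hf.1, iSup_range]

protected theorem id : IsHom Q (id : M → M) :=
  ⟨fun _ => sSup_eq_iSup, fun _ _ => rfl⟩

theorem comp {g : N → P} {f : M → N} (hg : IsHom Q g) (hf : IsHom Q f) :
    IsHom Q (g ∘ f) := by
  refine ⟨fun S => ?_, fun a v => ?_⟩
  · simp only [comp_apply, hf.1, iSup_subtype', hg.map_iSup]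
  · simp only [comp_apply, hf.2, hg.2]

theorem map_linearCombination {f : M → N} (hf : IsHom Q f) {X : Type*} (n : X → M)
    (c : X → Q) : f (linearCombination n c) = linearCombination (f ∘ n) c := by
  rw [linearCombination, hf.map_iSup]
  exact iSup_congr fun x => hf.2 _ _

theorem of_injective_comp {φ : M → N} {ρ : N → M} (hφ : IsHom Q φ) (hinj : Injective φ)
    (h : IsHom Q (φ ∘ ρ)) : IsHom Q ρ := by
  refine ⟨fun S => hinj ?_, fun a v => hinj ?_⟩
  · rw [← comp_apply (f := φ), h.1, iSup_subtype', iSup_subtype', hφ.map_iSup]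
    rfl
  · rw [← comp_apply (f := φ), h.2, hφ.2]
    rfl

end IsHom

section Free

variable {Q : Type u} [Monoid Q] [CompleteLattice Q] [IsQuantale Q] {X : Type*}

theorem isHom_linearCombination {M : Type*} [CompleteLattice M] [QuantaleModule Q M]
    (n : X → M) : IsHom Q (linearCombination (Q := Q) n) := by
  refine ⟨fun S => ?_, fun a f => ?_⟩
  · simp only [linearCombination, sSup_apply, iSup_subtype', iSup_smul]
    exact iSup_comm
  · simp only [linearCombination, Pi.smul_apply, smul_eq_mul, QuantaleModule.mul_smul,
      smul_iSup]

def basisVector [DecidableEq X] (x : X) : X → Q := fun y => if y = x then 1 else ⊥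

theorem linearCombination_basisVector [DecidableEq X] (f : X → Q) :
    linearCombination basisVector f = f := by
  funext y
  rw [linearCombination, iSup_apply]
  refine le_antisymm (iSup_le fun x => ?_) ?_
  · by_cases h : y = x <;> simp [basisVector, h]
  · calc f y = (f y • basisVector y) y := by simp [basisVector]
      _ ≤ ⨆ x, (f x • basisVector x) y := le_iSup (fun x => (f x • basisVector x) y) y

theorem projectiveQM_pi (X : Type u) : ProjectiveQM Q (X → Q) := by
  classical
  intro N P _ _ _ _ π g hπ hsurj hg
  choose n hn using fun x : X => hsurj (g (basisVector x))
  refine ⟨linearCombination n, isHom_linearCombination n, funext fun f => ?_⟩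
  calc π (linearCombination n f) = linearCombination (π ∘ n) f := hπ.map_linearCombination n f
    _ = linearCombination (g ∘ basisVector) f := congrArg (linearCombination · f) (funext hn)
    _ = g f := by rw [← hg.map_linearCombination, linearCombination_basisVector]

theorem ProjectiveQM.of_leftInverse {M P : Type u} [CompleteLattice M] [CompleteLattice P]
    [QuantaleModule Q M] [QuantaleModule Q P] {φ : M → P} {ρ : P → M} (hφ : IsHom Q φ)
    (hρ : IsHom Q ρ) (hρφ : LeftInverse ρ φ) (hP : ProjectiveQM Q P) : ProjectiveQM Q M := by
  intro N R _ _ _ _ π g hπ hsurj hg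
  obtain ⟨H, hH, hπH⟩ := hP N R π (g ∘ ρ) hπ hsurj (hg.comp hρ)
  refine ⟨H ∘ φ, hH.comp hφ, funext fun v => ?_⟩
  calc π (H (φ v)) = g (ρ (φ v)) := congrFun hπH (φ v)
    _ = g v := by rw [hρφ v]

end Free

section Kernel

variable {Q : Type u} [Monoid Q] [CompleteLattice Q] [IsQuantale Q] {X : Type*}

theorem hk_eq_linearCombination (k : X → X → Q) : hk k = linearCombination k := by
  funext f y
  rw [linearCombination, iSup_apply]
  rfl

theorem isHom_hk (k : X → X → Q) : IsHom Q (hk k) :=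
  hk_eq_linearCombination k ▸ isHom_linearCombination k

theorem hk_hk_of_matStar_self {k : X → X → Q} (hkk : matStar k k = k) (f : X → Q) :
    hk k (hk k f) = hk k f := by
  funext y
  calc hk k (hk k f) y = ⨆ x, (⨆ z, f z * k z x) * k x y := rfl
    _ = ⨆ z, f z * matStar k k z y := by
        simp only [matStar, Quantale.iSup_mul_distrib, Quantale.mul_iSup_distrib, mul_assoc]
        exact iSup_comm
    _ = hk k f y := by rw [hkk]; rfl

variable {M : Type*} [CompleteLattice M] [QuantaleModule Q M]

theorem hk_comp_eq_comp_linearCombination {s : M → (X → Q)} (hs : IsHom Q s) (n : X → M) :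
    hk (s ∘ n) = s ∘ linearCombination n := by
  funext c
  rw [comp_apply, hs.map_linearCombination, hk_eq_linearCombination]

variable {s : M → (X → Q)} {n : X → M}

theorem matStar_comp_self_of_leftInverse (hs : IsHom Q s)
    (hsec : LeftInverse (linearCombination n) s) : matStar (s ∘ n) (s ∘ n) = s ∘ n := by
  funext x
  calc matStar (s ∘ n) (s ∘ n) x = hk (s ∘ n) (s (n x)) := rfl
    _ = s (n x) := by rw [hk_comp_eq_comp_linearCombination hs, comp_apply, hsec]

theorem range_hk_comp_of_leftInverse (hs : IsHom Q s)
    (hsec : LeftInverse (linearCombination n) s) : Set.range (hk (s ∘ n)) = Set.range s := by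
  rw [hk_comp_eq_comp_linearCombination hs, hsec.surjective.range_comp]

/-- The retraction is `φ⁻¹ ∘ h_k`; it inverts `φ` because `h_k` is idempotent with the same
range as `φ`. -/
theorem exists_isHom_leftInverse_of_range_eq_range_hk {k : X → X → Q}
    (hkk : matStar k k = k) {φ : M → (X → Q)} (hφ : IsHom Q φ) (hinj : Injective φ)
    (hrange : Set.range φ = Set.range (hk k)) :
    ∃ ρ : (X → Q) → M, IsHom Q ρ ∧ LeftInverse ρ φ := by
  choose ρ hρ using fun f => (hrange ▸ Set.mem_range_self f : hk k f ∈ Set.range φ)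
  have hφρ : φ ∘ ρ = hk k := funext hρ
  refine ⟨ρ, hφ.of_injective_comp hinj (hφρ ▸ isHom_hk k), fun v => hinj ?_⟩
  obtain ⟨f, hf⟩ : φ v ∈ Set.range (hk k) := hrange ▸ Set.mem_range_self v
  rw [hρ, ← hf, hk_hk_of_matStar_self hkk]

end Kernel

/-- **Theorem (characterization of projective `Q`-modules).** Let `M` be a `Q`-module
generated by `X ⊆ M`. Then `M` is projective iff there is a multiplicatively
idempotent `k ∈ Q^(X×X)` (`k ⋆ k = k`) such that `M` is isomorphic to the submodule
of `Q^X` generated by the rows `{k(x,·)}` — i.e. there is an injective `Q`-module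
homomorphism `φ : M → Q^X` whose range is the range of `h_k` (the set of all joins
`⨆ x, c x • k(x,·)`). -/
theorem projective_iff_idempotent_kernel (Q : Type u) (M : Type u)
    [Monoid Q] [CompleteLattice Q] [IsQuantale Q] [CompleteLattice M] [QuantaleModule Q M]
    (X : Set M) (hgen : ∀ v : M, ∃ c : X → Q, v = ⨆ x : X, c x • (x : M)) :
    ProjectiveQM Q M ↔
      ∃ k : X → X → Q, matStar k k = k ∧
        ∃ φ : M → (X → Q), IsHom Q φ ∧ Function.Injective φ ∧
          Set.range φ = Set.range (hk k) := by
  constructor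
  · intro hproj
    have hsurj : Surjective (linearCombination (Q := Q) ((↑) : X → M)) := fun v =>
      (hgen v).imp fun _ hc => hc.symm
    obtain ⟨s, hs, hεs⟩ := hproj _ M _ id (isHom_linearCombination _) hsurj IsHom.id
    have hsec : LeftInverse (linearCombination ((↑) : X → M)) s := congrFun hεs
    exact ⟨s ∘ (↑), matStar_comp_self_of_leftInverse hs hsec, s, hs, hsec.injective,
      (range_hk_comp_of_leftInverse hs hsec).symm⟩
  · rintro ⟨k, hkk, φ, hφ, hinj, hrange⟩
    obtain ⟨ρ, hρ, hρφ⟩ := exists_isHom_leftInverse_of_range_eq_range_hk hkk hφ hinj hrange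
    exact ProjectiveQM.of_leftInverse hφ hρ hρφ (projectiveQM_pi X)
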